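/- Let u, H : ℝ³ → ℝ³ be continuously differentiable with H compactly supported. Then ∫_{ℝ³} ((∇×H)(x) × H(x)) · u(x) dx + ∫_{ℝ³} (∇×(u×H))(x) · H(x) dx = 0; that is, the work done by the Lorentz force on the fluid exactly cancels the energy input of the stretching term in the induction equation. -/

import Mathlib

/-
Put `W = u × H`. By the triple product, `((∇×H)×H)·u = -(∇×H)·W`, so the integrand is
`(∇×W)·H - W·(∇×H) = ∇·(W×H)`. The integral of the divergence of a compactly supported `C¹`
field vanishes, since each `∫ ∂ⱼ Fⱼ = 0` by integration by parts against the constant `1`.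
-/

open MeasureTheory
open scoped ENNReal

noncomputable section

/-- ℝ³ with the Euclidean norm. -/
abbrev E3 : Type := EuclideanSpace ℝ (Fin 3)

/-- View a triple of reals as a point of Euclidean ℝ³. -/
def toE3 (v : Fin 3 → ℝ) : E3 := WithLp.toLp 2 v

/-- The `j`-th standard basis vector of ℝ³. -/
def e3 (j : Fin 3) : E3 := EuclideanSpace.single j 1

/-- Partial derivative ∂ⱼF of a vector field, as a vector. -/
def pdv (F : E3 → E3) (j : Fin 3) (x : E3) : E3 := fderiv ℝ F x (e3 j)

/-- curl F = ∇×F = (∂₂F₃−∂₃F₂, ∂₃F₁−∂₁F₃, ∂₁F₂−∂₂F₁). -/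
def vcurl (F : E3 → E3) (x : E3) : E3 :=
  toE3 ![pdv F 1 x 2 - pdv F 2 x 1, pdv F 2 x 0 - pdv F 0 x 2, pdv F 0 x 1 - pdv F 1 x 0]

/-- Cross product on ℝ³. -/
def cross3 (a b : E3) : E3 :=
  toE3 ![a 1 * b 2 - a 2 * b 1, a 2 * b 0 - a 0 * b 2, a 0 * b 1 - a 1 * b 0]

section IntegrationByParts

variable {E F : Type*} [NormedAddCommGroup E] [NormedSpace ℝ E] [MeasurableSpace E]
  [BorelSpace E] {μ : Measure E} [NormedAddCommGroup F] [NormedSpace ℝ F]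

theorem integrable_fderiv_apply_of_hasCompactSupport [IsFiniteMeasureOnCompacts μ] {g : E → F}
    (hg : ContDiff ℝ 1 g) (hgc : HasCompactSupport g) (v : E) :
    Integrable (fun x => fderiv ℝ g x v) μ :=
  ((hg.continuous_fderiv one_ne_zero).clm_apply continuous_const).integrable_of_hasCompactSupport
    ((hgc.fderiv ℝ).comp_left (g := fun L : E →L[ℝ] F => L v) rfl)

theorem integral_fderiv_apply_eq_zero_of_hasCompactSupport [FiniteDimensional ℝ E]
    [μ.IsAddHaarMeasure] {g : E → F} (hg : ContDiff ℝ 1 g) (hgc : HasCompactSupport g) (v : E) :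
    ∫ x, fderiv ℝ g x v ∂μ = 0 := by
  simpa using integral_smul_fderiv_eq_neg_fderiv_smul_of_integrable (μ := μ)
    (f := fun _ => (1 : ℝ)) (g := g) (v := v) (by simp)
    (by simpa using integrable_fderiv_apply_of_hasCompactSupport hg hgc v)
    (by simpa using hg.continuous.integrable_of_hasCompactSupport hgc)
    (fun x _ => differentiableAt_const 1) (fun x _ => hg.differentiable one_ne_zero x)

end IntegrationByParts

def vdiv (F : E3 → E3) (x : E3) : ℝ := ∑ j, pdv F j x j

theorem pdv_apply {F : E3 → E3} {x : E3} (hF : DifferentiableAt ℝ F x) (j i : Fin 3) :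
    pdv F j x i = fderiv ℝ (fun y => F y i) x (e3 j) := by
  have h := ((EuclideanSpace.proj i : E3 →L[ℝ] ℝ).hasFDerivAt.comp x hF.hasFDerivAt).fderiv
  exact (DFunLike.congr_fun h (e3 j)).symm

theorem continuous_pdv {F : E3 → E3} (hF : ContDiff ℝ 1 F) (j : Fin 3) : Continuous (pdv F j) :=
  (hF.continuous_fderiv one_ne_zero).clm_apply continuous_const

theorem continuous_vcurl {F : E3 → E3} (hF : ContDiff ℝ 1 F) : Continuous (vcurl F) := by
  have h : ∀ j i, Continuous fun x => pdv F j x i := fun j i =>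
    (PiLp.continuous_apply 2 _ i).comp (continuous_pdv hF j)
  refine (PiLp.continuous_toLp 2 _).comp (continuous_pi fun i => ?_)
  fin_cases i <;> exact (h _ _).sub (h _ _)

theorem integral_vdiv_eq_zero {F : E3 → E3} (hF : ContDiff ℝ 1 F) (hFc : HasCompactSupport F) :
    ∫ x, vdiv F x = 0 := by
  have hFi : ∀ i, ContDiff ℝ 1 fun y => F y i := contDiff_euclidean.mp hF
  have hFic : ∀ i, HasCompactSupport fun y => F y i := fun i =>
    hFc.comp_left (g := fun v : E3 => v i) rfl
  simp only [vdiv, pdv_apply (hF.differentiable one_ne_zero _)]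
  rw [integral_finsetSum _ fun j _ =>
    integrable_fderiv_apply_of_hasCompactSupport (hFi j) (hFic j) _]
  simp [integral_fderiv_apply_eq_zero_of_hasCompactSupport (hFi _) (hFic _)]

def cross3L : E3 →L[ℝ] E3 →L[ℝ] E3 :=
  LinearMap.toContinuousLinearMap <| LinearMap.toContinuousLinearMap.toLinearMap ∘ₗ
    LinearMap.mk₂ ℝ cross3
      (by intros; ext i; fin_cases i <;> simp [cross3, toE3] <;> ring)
      (by intros; ext i; fin_cases i <;> simp [cross3, toE3] <;> ring)
      (by intros; ext i; fin_cases i <;> simp [cross3, toE3] <;> ring)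
      (by intros; ext i; fin_cases i <;> simp [cross3, toE3] <;> ring)

theorem cross3_zero_right (a : E3) : cross3 a 0 = 0 := (cross3L a).map_zero

theorem cross3_anticomm (a b : E3) : cross3 b a = -cross3 a b := by
  ext i; fin_cases i <;> simp [cross3, toE3] <;> ring

theorem inner_cross3_left (a b c : E3) : inner ℝ (cross3 a b) c = inner ℝ a (cross3 b c) := by
  simp [cross3, toE3, PiLp.inner_apply, Fin.sum_univ_three]; ring

theorem Continuous.cross3 {X : Type*} [TopologicalSpace X] {A B : X → E3} (hA : Continuous A)
    (hB : Continuous B) : Continuous fun y => cross3 (A y) (B y) :=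
  (cross3L.continuous.comp hA).clm_apply hB

theorem ContDiff.cross3 {n : WithTop ℕ∞} {A B : E3 → E3} (hA : ContDiff ℝ n A)
    (hB : ContDiff ℝ n B) : ContDiff ℝ n fun y => cross3 (A y) (B y) :=
  (cross3L.contDiff.comp hA).clm_apply hB

theorem pdv_cross3 {A B : E3 → E3} {x : E3} (hA : DifferentiableAt ℝ A x)
    (hB : DifferentiableAt ℝ B x) (j : Fin 3) :
    pdv (fun y => cross3 (A y) (B y)) j x =
      cross3 (pdv A j x) (B x) + cross3 (A x) (pdv B j x) := by
  change fderiv ℝ (fun y => cross3L (A y) (B y)) x (e3 j) =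
    cross3L (pdv A j x) (B x) + cross3L (A x) (pdv B j x)
  rw [cross3L.fderiv_of_bilinear hA hB, add_comm]
  rfl

theorem vdiv_cross3 {A B : E3 → E3} {x : E3} (hA : DifferentiableAt ℝ A x)
    (hB : DifferentiableAt ℝ B x) :
    vdiv (fun y => cross3 (A y) (B y)) x =
      inner ℝ (vcurl A x) (B x) - inner ℝ (A x) (vcurl B x) := by
  simp only [vdiv, pdv_cross3 hA hB]
  simp [Fin.sum_univ_three, vcurl, cross3, toE3, PiLp.inner_apply]
  ring

/-- The work done by the Lorentz force on the fluid cancels the energy input of the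
stretching term in the induction equation:
∫ ((∇×H)×H)·u + ∫ (∇×(u×H))·H = 0. -/
theorem lorentz_work_cancellation (u H : E3 → E3)
    (hu : ContDiff ℝ 1 u) (hH : ContDiff ℝ 1 H) (hHc : HasCompactSupport H) :
    (∫ x, (inner ℝ (cross3 (vcurl H x) (H x)) (u x) : ℝ)) +
      (∫ x, (inner ℝ (vcurl (fun y => cross3 (u y) (H y)) x) (H x) : ℝ)) = 0 := by
  set W := fun y => cross3 (u y) (H y)
  have hW : ContDiff ℝ 1 W := hu.cross3 hH
  have hH0 : ∀ x ∉ tsupport H, H x = 0 := fun x hx => image_eq_zero_of_notMem_tsupport hx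
  have hint₁ : Integrable fun x => inner ℝ (cross3 (vcurl H x) (H x)) (u x) :=
    (((continuous_vcurl hH).cross3 hH.continuous).inner
      hu.continuous).integrable_of_hasCompactSupport
      (HasCompactSupport.intro hHc fun x hx => by simp [hH0 x hx, cross3_zero_right])
  have hint₂ : Integrable fun x => inner ℝ (vcurl W x) (H x) :=
    ((continuous_vcurl hW).inner hH.continuous).integrable_of_hasCompactSupport
      (HasCompactSupport.intro hHc fun x hx => by simp [hH0 x hx])
  have hdiv : ∀ x, inner ℝ (cross3 (vcurl H x) (H x)) (u x) + inner ℝ (vcurl W x) (H x)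
      = vdiv (fun y => cross3 (W y) (H y)) x := fun x => by
    rw [vdiv_cross3 (hW.differentiable one_ne_zero x) (hH.differentiable one_ne_zero x),
      inner_cross3_left, cross3_anticomm, inner_neg_right, real_inner_comm (W x)]
    ring
  rw [← integral_add hint₁ hint₂, funext hdiv]
  exact integral_vdiv_eq_zero (hW.cross3 hH)
    (HasCompactSupport.intro hHc fun x hx => by simp [hH0 x hx, cross3_zero_right])
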